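/- Let E be a complete real inner product space and let g1, g2 ∈ E with g1 ≠ 0. Define g̃2 = g2 - δ(⟪g1,g2⟫ < 0)·(⟪g1,g2⟫/‖g1‖²)·g1. Then g̃2 is the unique minimizer of the function x ↦ ‖g2 - x‖ over the feasible set K = {x ∈ E : ⟪x,g1⟫ ≥ 0 and ⟪x,g2⟫ ≥ 0}; that is, g̃2 ∈ K, and for every x ∈ K one has ‖g2 - g̃2‖ ≤ ‖g2 - x‖, with equality only if x = g̃2. -/

import Mathlib

/-!
If `⟪g1, g2⟫ ≥ 0` the harmonized gradient is `g2 ∈ K` itself. Otherwise it is the orthogonal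
projection `p` of `g2` onto the hyperplane `g1ᗮ`; it lies in `K` by Cauchy–Schwarz, and `g2 - p` is a
nonpositive multiple of `g1`. In both cases `⟪g2 - p, x - p⟫ ≤ 0` for every `x ∈ K`, and this
obtuse-angle condition gives `‖g2 - p‖² + ‖p - x‖² ≤ ‖g2 - x‖²`, hence minimality and uniqueness.
-/

open scoped RealInnerProductSpace

section ObtuseAngle

variable {E : Type*} [NormedAddCommGroup E] [InnerProductSpace ℝ E] {y p x : E}

theorem norm_sub_sq_add_norm_sub_sq_le_of_inner_nonpos (h : ⟪y - p, x - p⟫ ≤ 0) :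
    ‖y - p‖ ^ 2 + ‖p - x‖ ^ 2 ≤ ‖y - x‖ ^ 2 := by
  have hcross : 0 ≤ ⟪y - p, p - x⟫ := by
    rw [← neg_sub x p, inner_neg_right]
    linarith
  rw [show y - x = (y - p) + (p - x) by abel, norm_add_sq_real]
  linarith

theorem norm_sub_le_norm_sub_of_inner_nonpos (h : ⟪y - p, x - p⟫ ≤ 0) :
    ‖y - p‖ ≤ ‖y - x‖ := by
  have hsq := norm_sub_sq_add_norm_sub_sq_le_of_inner_nonpos h
  exact (pow_le_pow_iff_left₀ (norm_nonneg _) (norm_nonneg _) two_ne_zero).mp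
    (by nlinarith [sq_nonneg ‖p - x‖])

theorem eq_of_norm_sub_eq_of_inner_nonpos (h : ⟪y - p, x - p⟫ ≤ 0)
    (heq : ‖y - p‖ = ‖y - x‖) : x = p := by
  have hsq := norm_sub_sq_add_norm_sub_sq_le_of_inner_nonpos h
  rw [heq] at hsq
  have hzero : ‖p - x‖ = 0 := pow_eq_zero_iff two_ne_zero |>.mp
    (le_antisymm (by linarith) (sq_nonneg _))
  exact (norm_sub_eq_zero_iff.mp hzero).symm

end ObtuseAngle

section ProjOrth

variable {E : Type*} [NormedAddCommGroup E] [InnerProductSpace ℝ E]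

/-- The orthogonal projection of `v` onto the hyperplane `uᗮ` (for `u = 0`, the identity). -/
noncomputable def projOrth (u v : E) : E := v - (⟪u, v⟫ / ‖u‖ ^ 2) • u

theorem inner_projOrth_self (u v : E) : ⟪projOrth u v, u⟫ = 0 := by
  rcases eq_or_ne u 0 with rfl | hu
  · simp
  have hu2 : ‖u‖ ^ 2 ≠ 0 := pow_ne_zero 2 (norm_ne_zero_iff.mpr hu)
  rw [projOrth, inner_sub_left, real_inner_smul_left, real_inner_self_eq_norm_sq,
    real_inner_comm, div_mul_cancel₀ _ hu2, sub_self]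

theorem inner_projOrth_nonneg (u v : E) : 0 ≤ ⟪projOrth u v, v⟫ := by
  have hcs : ⟪u, v⟫ * ⟪u, v⟫ ≤ ‖u‖ ^ 2 * ‖v‖ ^ 2 := by
    simpa only [real_inner_self_eq_norm_sq] using real_inner_mul_inner_self_le u v
  rw [projOrth, inner_sub_left, real_inner_smul_left, real_inner_self_eq_norm_sq,
    div_mul_eq_mul_div, sub_nonneg]
  exact div_le_of_le_mul₀ (by positivity) (by positivity) (by linarith)

theorem inner_sub_projOrth_nonpos {u v x : E} (huv : ⟪u, v⟫ ≤ 0) (hx : 0 ≤ ⟪x, u⟫) :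
    ⟪v - projOrth u v, x - projOrth u v⟫ ≤ 0 := by
  have hdiff : v - projOrth u v = (⟪u, v⟫ / ‖u‖ ^ 2) • u := by
    rw [projOrth, sub_sub_cancel]
  rw [hdiff, real_inner_smul_left, inner_sub_right, real_inner_comm x u,
    real_inner_comm (projOrth u v) u, inner_projOrth_self, sub_zero]
  exact mul_nonpos_of_nonpos_of_nonneg (div_nonpos_of_nonpos_of_nonneg huv (by positivity)) hx

end ProjOrth

theorem gh_lemma2_general {E : Type*} [NormedAddCommGroup E] [InnerProductSpace ℝ E]
    (g1 g2 : E)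
    (K : Set E) (hK : K = {x : E | 0 ≤ ⟪x, g1⟫ ∧ 0 ≤ ⟪x, g2⟫})
    (g2t : E)
    (hg2t : g2t = g2 - ((if ⟪g1, g2⟫ < 0 then (1 : ℝ) else 0) * (⟪g1, g2⟫ / ‖g1‖ ^ 2)) • g1) :
    g2t ∈ K ∧ ∀ x ∈ K, ‖g2 - g2t‖ ≤ ‖g2 - x‖ ∧ (‖g2 - g2t‖ = ‖g2 - x‖ → x = g2t) := by
  subst hK
  suffices hvar : (0 ≤ ⟪g2t, g1⟫ ∧ 0 ≤ ⟪g2t, g2⟫) ∧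
      ∀ x : E, 0 ≤ ⟪x, g1⟫ → ⟪g2 - g2t, x - g2t⟫ ≤ 0 from
    ⟨hvar.1, fun x hx => ⟨norm_sub_le_norm_sub_of_inner_nonpos (hvar.2 x hx.1),
      eq_of_norm_sub_eq_of_inner_nonpos (hvar.2 x hx.1)⟩⟩
  split_ifs at hg2t with h
  · rw [one_mul] at hg2t
    change g2t = projOrth g1 g2 at hg2t
    subst hg2t
    exact ⟨⟨(inner_projOrth_self g1 g2).ge, inner_projOrth_nonneg g1 g2⟩,
      fun x hx => inner_sub_projOrth_nonpos h.le hx⟩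
  · rw [zero_mul, zero_smul, sub_zero] at hg2t
    subst hg2t
    refine ⟨⟨?_, real_inner_self_nonneg⟩, fun x _ => by simp⟩
    rw [real_inner_comm]
    exact not_lt.mp h

/-- **Lemma 2 (GH).** In a complete real inner product space, with `g1 ≠ 0`, the
GH-harmonized gradient `g̃2 = g2 - δ(⟪g1,g2⟫ < 0) * (⟪g1,g2⟫/‖g1‖²) • g1` is the unique
minimizer of `x ↦ ‖g2 - x‖` over `K = {x | ⟪x,g1⟫ ≥ 0 ∧ ⟪x,g2⟫ ≥ 0}`. -/
theorem gh_lemma2 {E : Type*} [NormedAddCommGroup E] [InnerProductSpace ℝ E] [CompleteSpace E]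
    (g1 g2 : E) (hg1 : g1 ≠ 0)
    (K : Set E) (hK : K = {x : E | 0 ≤ ⟪x, g1⟫ ∧ 0 ≤ ⟪x, g2⟫})
    (g2t : E)
    (hg2t : g2t = g2 - ((if ⟪g1, g2⟫ < 0 then (1 : ℝ) else 0) * (⟪g1, g2⟫ / ‖g1‖ ^ 2)) • g1) :
    g2t ∈ K ∧ ∀ x ∈ K, ‖g2 - g2t‖ ≤ ‖g2 - x‖ ∧ (‖g2 - g2t‖ = ‖g2 - x‖ → x = g2t) :=
  gh_lemma2_general g1 g2 K hK g2t hg2t
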